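/- arXiv:2106.14254 — 2 statements merged into one kernel-verified Lean document; each statement's English description precedes it below -/
import Mathlib

section
/- Let U ⊆ (ℂ*)ⁿ be a Reinhardt domain (an open set invariant under the 𝕋ⁿ-action (z_1,…,z_n) ↦ (e^{iθ_1} z_1, …, e^{iθ_n} z_n)) whose logarithmic shadow Ω := { x ∈ ℝⁿ : (e^{x_1}, …, e^{x_n}) ∈ U } is convex, and let g : U → ℝ be a C² plurisubharmonic function. Then the function M̂ : Ω → ℝ defined by M̂(x) := max { g(e^{x_1} e^{iθ_1}, …, e^{x_n} e^{iθ_n}) : (θ_1,…,θ_n) ∈ [0,2π]ⁿ } is convex on Ω (Hadamard three-circle theorem for tori). -/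
open MeasureTheory

/-- The Levi form of a real-valued `C²` function `f` on an open set `s ⊆ ℂⁿ` at the
point `p`, evaluated on the vector `v`: for `f` real-valued this equals
`∑_{j,k} (∂²f/∂z_j∂z̄_k)(p) v_j conj(v_k)`, expressed via the real second
derivative as `(1/4)(D²f(v,v) + D²f(i•v, i•v))`. -/
noncomputable def leviFormWithin (n : ℕ) (f : (Fin n → ℂ) → ℝ) (s : Set (Fin n → ℂ))
    (p v : Fin n → ℂ) : ℝ :=
  (1 / 4) * (iteratedFDerivWithin ℝ 2 f s p ![v, v] +
    iteratedFDerivWithin ℝ 2 f s p ![Complex.I • v, Complex.I • v])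

/-- A `C²` function on an open set `s ⊆ ℂⁿ` is plurisubharmonic on `s` if its Levi
form is positive semidefinite at every point of `s`. -/
def PlurisubharmonicOn (n : ℕ) (f : (Fin n → ℂ) → ℝ) (s : Set (Fin n → ℂ)) : Prop :=
  ∀ p ∈ s, ∀ v : Fin n → ℂ, 0 ≤ leviFormWithin n f s p v


open Filter Set Complex

/-- Second derivative test: at an interior local max, the second derivative is ≤ 0. -/
lemma sdt (φ p : ℝ → ℝ) (L : ℝ)
    (h1 : ∀ᶠ t in nhds (0:ℝ), HasDerivAt φ (p t) t)
    (h2 : HasDerivAt p L 0) (hmax : IsLocalMax φ 0) : L ≤ 0 := by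
  by_contra hL
  push_neg at hL
  have hp0 : p 0 = 0 := hmax.hasDerivAt_eq_zero h1.self_of_nhds
  have hslope : Tendsto (fun t => p t / t) (nhdsWithin (0:ℝ) (Set.Ioi 0)) (nhds L) := by
    have h0 := hasDerivAt_iff_tendsto_slope.1 h2
    have h' := h0.mono_left (nhdsWithin_mono _ (fun t ht => ne_of_gt ht))
    refine h'.congr (fun t => ?_)
    simp [slope_def_field, hp0]
  have hpos : ∀ᶠ t in nhdsWithin (0:ℝ) (Set.Ioi 0), 0 < p t := by
    filter_upwards [hslope.eventually_const_lt hL, self_mem_nhdsWithin] with t ht ht'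
    have := mul_pos ht (show (0:ℝ) < t from ht')
    rwa [div_mul_cancel₀] at this
    exact ne_of_gt ht'
  -- get intervals
  obtain ⟨u, hu, hIoo⟩ := mem_nhdsGT_iff_exists_Ioo_subset.1 hpos
  obtain ⟨δ₁, hδ₁, hball⟩ := Metric.eventually_nhds_iff_ball.1 (h1.and hmax)
  set δ : ℝ := min (δ₁/2) (u/2) with hδdef
  have hδpos : 0 < δ := lt_min (by linarith) (by simpa using hu)
  have hsub1 : Icc (0:ℝ) δ ⊆ Metric.ball 0 δ₁ := by
    intro t ht
    simp only [Metric.mem_ball, Real.dist_eq, abs_sub_comm, sub_zero]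
    rw [_root_.abs_of_nonneg ht.1]
    calc t ≤ δ := ht.2
    _ ≤ δ₁/2 := min_le_left _ _
    _ < δ₁ := by linarith
  have hmono : StrictMonoOn φ (Icc 0 δ) := by
    apply strictMonoOn_of_deriv_pos (convex_Icc _ _)
    · intro t ht
      exact ((hball t (hsub1 ht)).1.continuousAt).continuousWithinAt
    · intro t ht
      rw [interior_Icc] at ht
      rw [(hball t (hsub1 (Ioo_subset_Icc_self ht))).1.deriv]
      apply hIoo
      constructor
      · exact ht.1
      · calc t < δ := ht.2
          _ ≤ u/2 := min_le_right _ _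
          _ < u := by simpa using hu
  have : φ 0 < φ δ := hmono (by constructor <;> [rfl; positivity] ) (by constructor <;> simp [le_of_lt hδpos]) hδpos
  have hle : φ δ ≤ φ 0 := (hball δ (hsub1 (by constructor <;> simp [le_of_lt hδpos]))).2
  linarith

lemma line_re (ξ : ℂ) (t : ℝ) : (ξ + t • (1:ℂ)).re = ξ.re + t := by
  simp [Complex.real_smul]
lemma line_im (ξ : ℂ) (t : ℝ) : (ξ + t • (1:ℂ)).im = ξ.im := by
  simp [Complex.real_smul]
lemma lineI_re (ξ : ℂ) (t : ℝ) : (ξ + t • Complex.I).re = ξ.re := by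
  simp [Complex.real_smul]
lemma lineI_im (ξ : ℂ) (t : ℝ) : (ξ + t • Complex.I).im = ξ.im + t := by
  simp [Complex.real_smul]

set_option maxHeartbeats 2000000 in
/-- Three-lines / maximum principle on the strip for functions with
subharmonicity data along lines. -/
lemma three_lines (u : ℂ → ℝ) (A B C : ℝ)
    (hcont : ∀ ζ : ℂ, ζ.re ∈ Set.Icc (0:ℝ) 1 → ContinuousAt u ζ)
    (hsub : ∀ ζ : ℂ, ζ.re ∈ Set.Icc (0:ℝ) 1 → ∃ p q : ℝ → ℝ, ∃ Lp Lq : ℝ,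
      (∀ᶠ t in nhds (0:ℝ), HasDerivAt (fun t' => u (ζ + t' • (1:ℂ))) (p t) t) ∧
      HasDerivAt p Lp 0 ∧
      (∀ᶠ t in nhds (0:ℝ), HasDerivAt (fun t' => u (ζ + t' • Complex.I)) (q t) t) ∧
      HasDerivAt q Lq 0 ∧ 0 ≤ Lp + Lq)
    (hA : ∀ ζ : ℂ, ζ.re = 0 → u ζ ≤ A) (hB : ∀ ζ : ℂ, ζ.re = 1 → u ζ ≤ B)
    (hC : ∀ ζ : ℂ, ζ.re ∈ Set.Icc (0:ℝ) 1 → u ζ ≤ C) :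
    ∀ ζ : ℂ, ζ.re ∈ Set.Icc (0:ℝ) 1 → u ζ ≤ (1 - ζ.re) * A + ζ.re * B := by
  intro ζ₀ hζ₀
  have hcos : ∀ σ : ℝ, σ ∈ Set.Icc (0:ℝ) 1 → Real.cos (1/2) ≤ Real.cos (σ - 1/2) := by
    intro σ hσ
    rw [← Real.cos_abs (σ - 1/2)]
    apply Real.cos_le_cos_of_nonneg_of_le_pi (abs_nonneg _)
    · linarith [Real.pi_gt_three]
    · rw [abs_le]; exact ⟨by linarith [hσ.1], by linarith [hσ.2]⟩
  have hcospos : 0 < Real.cos (1/2) := by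
    apply Real.cos_pos_of_mem_Ioo
    constructor <;> nlinarith [Real.pi_gt_three]
  -- main ε-claim
  have key : ∀ ε : ℝ, 0 < ε → u ζ₀ ≤ (1 - ζ₀.re) * A + ζ₀.re * B + ε * (Real.cosh ζ₀.im + 1) := by
    intro ε hε
    set η := ε with hηdef
    -- choose T
    set D : ℝ := max ((C + |A| + |B|) / (ε * Real.cos (1/2))) 0 with hD
    set T : ℝ := max |ζ₀.im| (2 * D) with hT
    have hT0 : 0 ≤ T := le_trans (abs_nonneg _) (le_max_left _ _)
    have hTbig : C + |A| + |B| ≤ ε * Real.cos (1/2) * Real.cosh T := by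
      have h1 : Real.cosh (2*D) ≤ Real.cosh T := by
        rw [Real.cosh_le_cosh, _root_.abs_of_nonneg (show (0:ℝ) ≤ 2*D by positivity), _root_.abs_of_nonneg hT0]
        exact le_max_right _ _
      have h2 : D ≤ Real.cosh (2*D) := by
        have := Real.add_one_le_exp (2*D)
        have h3 : Real.exp (2*D) / 2 ≤ Real.cosh (2*D) := by
          rw [Real.cosh_eq]
          have := Real.exp_pos (-(2*D))
          linarith
        have hD0 : 0 ≤ D := le_max_right _ _
        linarith
      have h4 : (C + |A| + |B|) / (ε * Real.cos (1/2)) ≤ D := le_max_left _ _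
      have h5 : (C + |A| + |B|) / (ε * Real.cos (1/2)) ≤ Real.cosh T := by linarith
      calc C + |A| + |B| = ((C + |A| + |B|) / (ε * Real.cos (1/2))) * (ε * Real.cos (1/2)) := by
            exact (div_mul_cancel₀ _ (mul_pos hε hcospos).ne').symm
        _ ≤ Real.cosh T * (ε * Real.cos (1/2)) := by
            apply mul_le_mul_of_nonneg_right _ (by positivity)
            linarith
        _ = ε * Real.cos (1/2) * Real.cosh T := by ring
    -- rectangle
    set R : Set ℂ := {ζ : ℂ | ζ.re ∈ Set.Icc (0:ℝ) 1 ∧ ζ.im ∈ Set.Icc (-T) T} with hR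
    have hζ₀R : ζ₀ ∈ R := ⟨hζ₀, by
      constructor
      · have := le_max_left |ζ₀.im| (2*D); rw [← hT] at this; linarith [neg_abs_le ζ₀.im]
      · exact le_trans (le_abs_self _) (le_max_left _ _)⟩
    have hRclosed : IsClosed R :=
      ((isClosed_Icc.preimage Complex.continuous_re).inter (isClosed_Icc.preimage Complex.continuous_im))
    have hRcomp : IsCompact R := by
      apply Metric.isCompact_of_isClosed_isBounded hRclosed
      rw [Metric.isBounded_iff_subset_closedBall 0]
      refine ⟨1 + T, fun ζ hζ => ?_⟩
      simp only [Metric.mem_closedBall, dist_zero_right]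
      calc ‖ζ‖ ≤ |ζ.re| + |ζ.im| := Complex.norm_le_abs_re_add_abs_im ζ
        _ ≤ 1 + T := by
            have h1 : |ζ.re| ≤ 1 := by rw [abs_le]; exact ⟨by linarith [hζ.1.1], hζ.1.2⟩
            have h2 : |ζ.im| ≤ T := by rw [abs_le]; exact ⟨hζ.2.1, hζ.2.2⟩
            linarith
    -- w
    set w : ℂ → ℝ := fun ζ => u ζ - ((1 - ζ.re) * A + ζ.re * B)
      - ε * (Real.cos (ζ.re - 1/2) * Real.cosh ζ.im) + η * ζ.re ^ 2 with hw
    have hwcont : ContinuousOn w R := by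
      apply ContinuousOn.add
      apply ContinuousOn.sub
      apply ContinuousOn.sub
      · exact fun ζ hζ => (hcont ζ hζ.1).continuousWithinAt
      · fun_prop
      · fun_prop
      · fun_prop
    obtain ⟨ξ, hξR, hξmax⟩ := hRcomp.exists_isMaxOn ⟨ζ₀, hζ₀R⟩ hwcont
    -- boundary classification
    have hbd : ξ.re = 0 ∨ ξ.re = 1 ∨ ξ.im = -T ∨ ξ.im = T := by
      by_contra hcon
      push_neg at hcon
      obtain ⟨h0, h1', hmT, hpT⟩ := hcon
      have hreIoo : ξ.re ∈ Set.Ioo (0:ℝ) 1 :=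
        ⟨lt_of_le_of_ne hξR.1.1 (Ne.symm h0), lt_of_le_of_ne hξR.1.2 h1'⟩
      have himIoo : ξ.im ∈ Set.Ioo (-T) T :=
        ⟨lt_of_le_of_ne hξR.2.1 (Ne.symm hmT), lt_of_le_of_ne hξR.2.2 hpT⟩
      -- R is a neighbourhood of ξ
      have hnhds : R ∈ nhds ξ := by
        have hopen : IsOpen {ζ : ℂ | ζ.re ∈ Set.Ioo (0:ℝ) 1 ∧ ζ.im ∈ Set.Ioo (-T) T} :=
          ((isOpen_Ioo.preimage Complex.continuous_re).inter (isOpen_Ioo.preimage Complex.continuous_im))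
        exact mem_nhds_iff.2 ⟨_, fun ζ hζ => ⟨Ioo_subset_Icc_self hζ.1, Ioo_subset_Icc_self hζ.2⟩,
          hopen, ⟨hreIoo, himIoo⟩⟩
      have hlm : IsLocalMax w ξ := hξmax.isLocalMax hnhds
      obtain ⟨p, q, Lp, Lq, hp1, hp2, hq1, hq2, hLpq⟩ := hsub ξ hξR.1
      -- direction 1
      have hL1 : Lp + ε * (Real.cos (ξ.re - 1/2) * Real.cosh ξ.im) + η * 2 ≤ 0 := by
        apply sdt (fun t => w (ξ + t • (1:ℂ)))
          (fun t => p t + (A - B) + ε * (Real.sin (ξ.re + t - 1/2) * Real.cosh ξ.im)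
            + η * (2 * (ξ.re + t)))
        · filter_upwards [hp1] with t hpt
          have e1 : HasDerivAt (fun t' : ℝ => (1 - (ξ.re + t')) * A + (ξ.re + t') * B) (B - A) t := by
            have := (((hasDerivAt_id t).const_add ξ.re).const_sub 1).mul_const A |>.add
              (((hasDerivAt_id t).const_add ξ.re).mul_const B)
            refine this.congr_deriv ?_; ring
          have e2 : HasDerivAt (fun t' : ℝ => ε * (Real.cos (ξ.re + t' - 1/2) * Real.cosh ξ.im))
              (ε * (-Real.sin (ξ.re + t - 1/2) * Real.cosh ξ.im)) t := by
            have hcosd : HasDerivAt (fun t' : ℝ => Real.cos (ξ.re + t' - 1/2))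
                (-Real.sin (ξ.re + t - 1/2)) t := by
              have := (Real.hasDerivAt_cos (ξ.re + t - 1/2)).comp t
                (((hasDerivAt_id t).const_add ξ.re).sub_const (1/2))
              simpa [Function.comp_def] using this
            exact ((hcosd.mul_const (Real.cosh ξ.im)).const_mul ε)
          have e3 : HasDerivAt (fun t' : ℝ => η * (ξ.re + t') ^ 2) (η * (2 * (ξ.re + t))) t := by
            have := ((((hasDerivAt_id t).const_add ξ.re)).pow 2).const_mul η
            refine this.congr_deriv ?_; simp [id]
          have hcomb := ((hpt.sub e1).sub e2).add e3
          have heq : (fun t' => w (ξ + t' • (1:ℂ))) = fun t' =>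
              u (ξ + t' • (1:ℂ)) - ((1 - (ξ.re + t')) * A + (ξ.re + t') * B)
              - ε * (Real.cos (ξ.re + t' - 1/2) * Real.cosh ξ.im) + η * (ξ.re + t') ^ 2 := by
            funext t'; rw [hw]; simp only [line_re, line_im]
          rw [heq]
          refine hcomb.congr_deriv ?_; ring
        · -- second derivative at 0
          have e1 : HasDerivAt (fun t : ℝ => ε * (Real.sin (ξ.re + t - 1/2) * Real.cosh ξ.im))
              (ε * (Real.cos (ξ.re - 1/2) * Real.cosh ξ.im)) 0 := by
            have hsind : HasDerivAt (fun t : ℝ => Real.sin (ξ.re + t - 1/2))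
                (Real.cos (ξ.re + 0 - 1/2)) 0 := by
              have := (Real.hasDerivAt_sin (ξ.re + 0 - 1/2)).comp 0
                (((hasDerivAt_id 0).const_add ξ.re).sub_const (1/2))
              simpa [Function.comp_def] using this
            have := (hsind.mul_const (Real.cosh ξ.im)).const_mul ε
            simpa using this
          have e2 : HasDerivAt (fun t : ℝ => η * (2 * (ξ.re + t))) (η * 2) 0 := by
            have := (((hasDerivAt_id (0:ℝ)).const_add ξ.re).const_mul 2).const_mul η
            refine this.congr_deriv ?_; ring
          have := ((hp2.add_const (A - B)).add e1).add e2
          convert this using 1 <;> rfl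
        · -- local max
          have hlin : ContinuousAt (fun t : ℝ => ξ + t • (1:ℂ)) 0 := by fun_prop
          have h0 : ξ + (0:ℝ) • (1:ℂ) = ξ := by simp
          have := hlm
          unfold IsLocalMax IsMaxFilter at this ⊢
          have := (hlin.tendsto.mono_left (le_refl _)).eventually (by rw [← h0] at this; exact this)
          simpa [h0] using this
      -- direction I
      have hLI : Lq - ε * (Real.cos (ξ.re - 1/2) * Real.cosh ξ.im) ≤ 0 := by
        apply sdt (fun t => w (ξ + t • Complex.I))
          (fun t => q t - ε * (Real.cos (ξ.re - 1/2) * Real.sinh (ξ.im + t)))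
        · filter_upwards [hq1] with t hqt
          have e2 : HasDerivAt (fun t' : ℝ => ε * (Real.cos (ξ.re - 1/2) * Real.cosh (ξ.im + t')))
              (ε * (Real.cos (ξ.re - 1/2) * Real.sinh (ξ.im + t))) t := by
            have hcoshd : HasDerivAt (fun t' : ℝ => Real.cosh (ξ.im + t'))
                (Real.sinh (ξ.im + t)) t := by
              have := (Real.hasDerivAt_cosh (ξ.im + t)).comp t ((hasDerivAt_id t).const_add ξ.im)
              simpa [Function.comp_def] using this
            exact (hcoshd.const_mul (Real.cos (ξ.re - 1/2))).const_mul ε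
          have hcomb := hqt.sub e2
          have heq : (fun t' => w (ξ + t' • Complex.I)) = fun t' =>
              u (ξ + t' • Complex.I) - ((1 - ξ.re) * A + ξ.re * B)
              - ε * (Real.cos (ξ.re - 1/2) * Real.cosh (ξ.im + t')) + η * ξ.re ^ 2 := by
            funext t'; rw [hw]; simp only [lineI_re, lineI_im]
          rw [heq]
          have : HasDerivAt (fun t' => (u (ξ + t' • Complex.I)
              - ε * (Real.cos (ξ.re - 1/2) * Real.cosh (ξ.im + t')))
              - ((1 - ξ.re) * A + ξ.re * B) + η * ξ.re ^ 2)
              (q t - ε * (Real.cos (ξ.re - 1/2) * Real.sinh (ξ.im + t))) t :=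
            (hcomb.sub_const _).add_const _
          convert this using 2 with t'
          ring
        · have e2 : HasDerivAt (fun t : ℝ => ε * (Real.cos (ξ.re - 1/2) * Real.sinh (ξ.im + t)))
              (ε * (Real.cos (ξ.re - 1/2) * Real.cosh ξ.im)) 0 := by
            have hsinhd : HasDerivAt (fun t : ℝ => Real.sinh (ξ.im + t)) (Real.cosh (ξ.im + 0)) 0 := by
              have := (Real.hasDerivAt_sinh (ξ.im + 0)).comp 0 ((hasDerivAt_id 0).const_add ξ.im)
              simpa [Function.comp_def] using this
            have := (hsinhd.const_mul (Real.cos (ξ.re - 1/2))).const_mul ε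
            simpa using this
          exact hq2.sub e2
        · have hlin : ContinuousAt (fun t : ℝ => ξ + t • Complex.I) 0 := by fun_prop
          have h0 : ξ + (0:ℝ) • Complex.I = ξ := by simp
          have hev := hlm
          unfold IsLocalMax IsMaxFilter at hev ⊢
          have := (hlin.tendsto.mono_left (le_refl _)).eventually (by rw [← h0] at hev; exact hev)
          simpa [h0] using this
      linarith
    -- boundary bounds
    have hwξ : w ξ ≤ η := by
      have hcosξ : Real.cos (1/2) ≤ Real.cos (ξ.re - 1/2) := hcos _ hξR.1
      have hcosh1 : (1:ℝ) ≤ Real.cosh ξ.im := Real.one_le_cosh _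
      have hcoshT : Real.cosh ξ.im ≤ Real.cosh T := by
        rw [Real.cosh_le_cosh, _root_.abs_of_nonneg hT0, abs_le]
        exact ⟨hξR.2.1, hξR.2.2⟩
      have hsq : ξ.re ^ 2 ≤ 1 := by nlinarith [hξR.1.1, hξR.1.2]
      have hsq0 : 0 ≤ ξ.re ^ 2 := sq_nonneg _
      have hepos : 0 < ε * (Real.cos (ξ.re - 1/2) * Real.cosh ξ.im) := by
        apply mul_pos hε

        exact mul_pos (lt_of_lt_of_le hcospos hcosξ) (by linarith)
      have hη2 : η * ξ.re ^ 2 ≤ η := by nlinarith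
      rcases hbd with h | h | h | h
      · have hu : u ξ ≤ A := hA ξ h
        have h' : (1 - ξ.re) * A + ξ.re * B = A := by rw [h]; ring
        have h'' : η * ξ.re ^ 2 = 0 := by rw [h]; ring
        rw [hw]
        simp only
        linarith
      · have hu : u ξ ≤ B := hB ξ h
        have h' : (1 - ξ.re) * A + ξ.re * B = B := by rw [h]; ring
        have h'' : η * ξ.re ^ 2 = η := by rw [h]; ring
        rw [hw]
        simp only
        linarith
      · have hu : u ξ ≤ C := hC ξ hξR.1
        have hch : Real.cosh ξ.im = Real.cosh T := by rw [h, Real.cosh_neg]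
        have hlin : -((1 - ξ.re) * A + ξ.re * B) ≤ |A| + |B| := by
          have h1 : -(((1 - ξ.re)) * A) ≤ (1 - ξ.re) * |A| := by
            rw [← mul_neg]
            apply mul_le_mul_of_nonneg_left (neg_le_abs A) (by linarith [hξR.1.2])
          have h2 : -(ξ.re * B) ≤ ξ.re * |B| := by
            rw [← mul_neg]
            apply mul_le_mul_of_nonneg_left (neg_le_abs B) hξR.1.1
          have h3 : (1 - ξ.re) * |A| ≤ |A| := by
            nlinarith [abs_nonneg A, hξR.1.1, hξR.1.2]
          have h4 : ξ.re * |B| ≤ |B| := by nlinarith [abs_nonneg B, hξR.1.1, hξR.1.2]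
          linarith
        have hterm : ε * Real.cos (1/2) * Real.cosh T ≤
            ε * (Real.cos (ξ.re - 1/2) * Real.cosh ξ.im) := by
          rw [hch]
          have : Real.cos (1/2) * Real.cosh T ≤ Real.cos (ξ.re - 1/2) * Real.cosh T := by
            apply mul_le_mul_of_nonneg_right hcosξ (by positivity)
          nlinarith
        rw [hw]
        simp only
        linarith [hu, hlin, hterm, hTbig, hη2]
      · have hu : u ξ ≤ C := hC ξ hξR.1
        have hch : Real.cosh ξ.im = Real.cosh T := by rw [h]
        have hlin : -((1 - ξ.re) * A + ξ.re * B) ≤ |A| + |B| := by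
          have h1 : -(((1 - ξ.re)) * A) ≤ (1 - ξ.re) * |A| := by
            rw [← mul_neg]
            apply mul_le_mul_of_nonneg_left (neg_le_abs A) (by linarith [hξR.1.2])
          have h2 : -(ξ.re * B) ≤ ξ.re * |B| := by
            rw [← mul_neg]
            apply mul_le_mul_of_nonneg_left (neg_le_abs B) hξR.1.1
          have h3 : (1 - ξ.re) * |A| ≤ |A| := by
            nlinarith [abs_nonneg A, hξR.1.1, hξR.1.2]
          have h4 : ξ.re * |B| ≤ |B| := by nlinarith [abs_nonneg B, hξR.1.1, hξR.1.2]
          linarith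
        have hterm : ε * Real.cos (1/2) * Real.cosh T ≤
            ε * (Real.cos (ξ.re - 1/2) * Real.cosh ξ.im) := by
          rw [hch]
          have : Real.cos (1/2) * Real.cosh T ≤ Real.cos (ξ.re - 1/2) * Real.cosh T := by
            apply mul_le_mul_of_nonneg_right hcosξ (by positivity)
          nlinarith
        rw [hw]
        simp only
        linarith [hu, hlin, hterm, hTbig, hη2]
    -- conclude
    have hwζ₀ : w ζ₀ ≤ η := le_trans (hξmax hζ₀R) hwξ
    have hcosle : Real.cos (ζ₀.re - 1/2) ≤ 1 := Real.cos_le_one _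
    have hcoshpos : 0 < Real.cosh ζ₀.im := Real.cosh_pos _
    have hsq0 : 0 ≤ ζ₀.re ^ 2 := sq_nonneg _
    rw [hw] at hwζ₀
    simp only at hwζ₀
    have hεcos : ε * (Real.cos (ζ₀.re - 1/2) * Real.cosh ζ₀.im) ≤ ε * Real.cosh ζ₀.im := by
      have : Real.cos (ζ₀.re - 1/2) * Real.cosh ζ₀.im ≤ 1 * Real.cosh ζ₀.im :=
        mul_le_mul_of_nonneg_right hcosle (le_of_lt hcoshpos)
      nlinarith
    have hsqpos : 0 ≤ η * ζ₀.re ^ 2 := by positivity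
    rw [hηdef] at hwζ₀
    linarith
  -- from key to the conclusion
  have hpos : 0 < Real.cosh ζ₀.im + 1 := by positivity
  by_contra hcon
  push_neg at hcon
  set δ := u ζ₀ - ((1 - ζ₀.re) * A + ζ₀.re * B) with hδ
  have hδpos : 0 < δ := by rw [hδ]; linarith
  have := key (δ / (2 * (Real.cosh ζ₀.im + 1))) (by positivity)
  have hh : δ / (2 * (Real.cosh ζ₀.im + 1)) * (Real.cosh ζ₀.im + 1) = δ / 2 := by
    field_simp
  rw [hh, hδ] at this
  linarith

lemma levi_eq (n : ℕ) (g : (Fin n → ℂ) → ℝ) (U : Set (Fin n → ℂ)) (hU : IsOpen U)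
    (p : Fin n → ℂ) (hp : p ∈ U) (v : Fin n → ℂ) :
    leviFormWithin n g U p v = (1/4) * ((fderiv ℝ (fderiv ℝ g) p v v) +
      (fderiv ℝ (fderiv ℝ g) p (Complex.I • v) (Complex.I • v))) := by
  have h1 : fderivWithin ℝ (fderivWithin ℝ g U) U p = fderiv ℝ (fderiv ℝ g) p := by
    rw [fderivWithin_congr (fun q hq => fderivWithin_of_isOpen hU hq)
      (fderivWithin_of_isOpen hU hp)]
    exact fderivWithin_of_isOpen hU hp
  unfold leviFormWithin
  rw [iteratedFDerivWithin_two_apply g hU.uniqueDiffOn hp,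
    iteratedFDerivWithin_two_apply g hU.uniqueDiffOn hp, h1]
  simp

lemma reduce_theta (n : ℕ) (e θ : Fin n → ℝ) : ∃ θ' : Fin n → ℝ,
    θ' ∈ Set.univ.pi (fun _ : Fin n => Set.Icc (0:ℝ) (2*Real.pi)) ∧
    (fun j => Complex.exp ((e j:ℂ) + (θ j:ℂ) * Complex.I)) =
      (fun j => Complex.exp ((e j:ℂ) + (θ' j:ℂ) * Complex.I)) := by
  refine ⟨fun j => θ j - ⌊θ j / (2*Real.pi)⌋ * (2*Real.pi), fun j _ => ⟨?_, ?_⟩, ?_⟩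
  · exact Int.sub_floor_div_mul_nonneg _ Real.two_pi_pos
  · exact le_of_lt (Int.sub_floor_div_mul_lt _ Real.two_pi_pos)
  · funext j
    set k : ℤ := ⌊θ j / (2*Real.pi)⌋ with hk
    have hsplit : ((e j:ℂ) + (θ j:ℂ) * Complex.I) =
        ((e j:ℂ) + ((θ j - k*(2*Real.pi) : ℝ):ℂ) * Complex.I) + k * (2*Real.pi*Complex.I) := by
      push_cast
      ring
    rw [hsplit, Complex.exp_add]
    have : Complex.exp ((k:ℂ) * (2*Real.pi*Complex.I)) = 1 := by
      have := Complex.exp_int_mul_two_pi_mul_I k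
      convert this using 3
    rw [this, mul_one]

lemma hasDerivAt_coord {n : ℕ} {F : ℝ → Fin n → ℂ} {F' : Fin n → ℂ} {t : ℝ}
    (h : HasDerivAt F F' t) (j : Fin n) : HasDerivAt (fun t' => F t' j) (F' j) t := by
  have := (ContinuousLinearMap.proj (R := ℝ) (φ := fun _ : Fin n => ℂ) j).hasFDerivAt.comp_hasDerivAt t h
  simpa [Function.comp_def] using this

lemma hasDerivAt_pi_of {n : ℕ} {F : ℝ → Fin n → ℂ} {F' : Fin n → ℂ} {t : ℝ}
    (h : ∀ j, HasDerivAt (fun t' => F t' j) (F' j) t) : HasDerivAt F F' t := by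
  rw [hasDerivAt_iff_hasFDerivAt]
  apply hasFDerivAt_pi'.2
  intro j
  have h2 := (h j).hasFDerivAt
  exact h2


set_option maxHeartbeats 1000000 in
/-- Hadamard three-circle theorem for tori: the fiberwise maximum of a PSH function
on a Reinhardt domain is convex in the logarithmic variables. -/
theorem hadamard_torus_max_convex (n : ℕ)
    (U : Set (Fin n → ℂ)) (hUopen : IsOpen U)
    (hUsub : U ⊆ {z | ∀ j, z j ≠ 0})
    (hUreinhardt : ∀ θ : Fin n → ℝ, ∀ z ∈ U,
      (fun j => Complex.exp ((θ j : ℂ) * Complex.I) * z j) ∈ U)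
    (Ω : Set (Fin n → ℝ))
    (hΩ : Ω = {x | (fun j => ((Real.exp (x j) : ℝ) : ℂ)) ∈ U})
    (hΩconv : Convex ℝ Ω)
    (g : (Fin n → ℂ) → ℝ)
    (hC2 : ContDiffOn ℝ 2 g U)
    (hPSH : PlurisubharmonicOn n g U)
    (M : (Fin n → ℝ) → ℝ)
    (hM : M = fun x => sSup ((fun θ : Fin n → ℝ =>
      g fun j => Complex.exp ((x j : ℂ) + (θ j : ℂ) * Complex.I)) ''
        Set.univ.pi fun _ : Fin n => Set.Icc (0 : ℝ) (2 * Real.pi))) :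
    ConvexOn ℝ Ω M := by
  have two_pi_pos := Real.two_pi_pos
  set Tor : Set (Fin n → ℝ) := Set.univ.pi (fun _ : Fin n => Set.Icc (0:ℝ) (2*Real.pi)) with hTor
  have hTorComp : IsCompact Tor := isCompact_univ_pi (fun _ => isCompact_Icc)
  have hTorNe : Tor.Nonempty := ⟨fun _ => 0, fun j _ => ⟨le_refl 0, by positivity⟩⟩
  set pt : (Fin n → ℝ) → (Fin n → ℝ) → (Fin n → ℂ) :=
    fun x θ => fun j => Complex.exp ((x j:ℂ) + (θ j:ℂ) * Complex.I) with hpt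
  have hptcont : ∀ x, Continuous (pt x) := by
    intro x
    apply continuous_pi
    intro j
    exact Complex.continuous_exp.comp (by continuity)
  -- membership in U
  have hmemU : ∀ x : Fin n → ℝ, x ∈ Ω → ∀ θ : Fin n → ℝ, pt x θ ∈ U := by
    intro x hx θ
    rw [hΩ] at hx
    have h2 := hUreinhardt θ _ hx
    have heq : pt x θ = fun j => Complex.exp ((θ j:ℂ) * Complex.I) * ((Real.exp (x j):ℝ):ℂ) := by
      funext j
      rw [hpt]
      simp only
      rw [show ((Real.exp (x j):ℝ):ℂ) = Complex.exp ((x j:ℂ)) by rw [Complex.ofReal_exp],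
        ← Complex.exp_add]
      ring_nf
    rw [heq]
    exact h2
  -- M as max over images
  have hS : ∀ x : Fin n → ℝ, M x = sSup ((fun θ => g (pt x θ)) '' Tor) := by
    intro x; rw [hM]
  have hScomp : ∀ x : Fin n → ℝ, x ∈ Ω → IsCompact ((fun θ => g (pt x θ)) '' Tor) := by
    intro x hx
    apply hTorComp.image_of_continuousOn
    apply hC2.continuousOn.comp (hptcont x).continuousOn
    intro θ _
    exact hmemU x hx θ
  have hSne : ∀ x : Fin n → ℝ, ((fun θ => g (pt x θ)) '' Tor).Nonempty :=
    fun x => hTorNe.image _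
  have hMle : ∀ x : Fin n → ℝ, x ∈ Ω → ∀ θ : Fin n → ℝ, g (pt x θ) ≤ M x := by
    intro x hx θ
    obtain ⟨θ', hθ'Tor, hθ'eq⟩ := reduce_theta n x θ
    rw [hS]
    apply le_csSup ((hScomp x hx).bddAbove)
    refine ⟨θ', hθ'Tor, ?_⟩
    rw [hpt]
    simp only
    rw [← hθ'eq]
  have hMattain : ∀ x : Fin n → ℝ, x ∈ Ω → ∃ θ' ∈ Tor, M x = g (pt x θ') := by
    intro x hx
    have := (hScomp x hx).sSup_mem (hSne x)
    rw [← hS x] at this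
    obtain ⟨θ', hθ', heq⟩ := this
    exact ⟨θ', hθ', heq.symm⟩
  refine ⟨hΩconv, ?_⟩
  intro x hx y hy a b ha hb hab
  set xt := a • x + b • y with hxt
  have hxtΩ : xt ∈ Ω := hΩconv hx hy ha hb hab
  have hb1 : b ≤ 1 := by linarith
  have ha1 : a = 1 - b := by linarith
  obtain ⟨θs, hθsTor, hθseq⟩ := hMattain xt hxtΩ
  -- the holomorphic curve data
  set cc : Fin n → ℂ := fun j => (x j:ℂ) + (θs j:ℂ) * Complex.I with hcc
  set bc : Fin n → ℂ := fun j => ((y j - x j : ℝ):ℂ) with hbc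
  set z : ℂ → Fin n → ℂ := fun ζ => fun j => Complex.exp (cc j + ζ * bc j) with hz
  set u : ℂ → ℝ := fun ζ => g (z ζ) with hu
  have hzpt : ∀ ζ : ℂ, z ζ = pt (fun j => x j + ζ.re * (y j - x j))
      (fun j => θs j + ζ.im * (y j - x j)) := by
    intro ζ
    funext j
    rw [hz, hpt]
    simp only
    congr 1
    rw [hcc, hbc]
    simp only [Complex.ext_iff, Complex.add_re, Complex.add_im, Complex.mul_re, Complex.mul_im,
      Complex.ofReal_re, Complex.ofReal_im, Complex.I_re, Complex.I_im]
    constructor <;> ring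
  have hseg : ∀ s : ℝ, s ∈ Set.Icc (0:ℝ) 1 → (fun j => x j + s * (y j - x j)) ∈ Ω := by
    intro s hs
    have heq : (fun j => x j + s * (y j - x j)) = (1-s) • x + s • y := by
      funext j
      simp only [Pi.add_apply, Pi.smul_apply, smul_eq_mul]
      ring
    rw [heq]
    exact hΩconv hx hy (by linarith [hs.2]) hs.1 (by ring)
  have hzU : ∀ ζ : ℂ, ζ.re ∈ Set.Icc (0:ℝ) 1 → z ζ ∈ U := by
    intro ζ hζ
    rw [hzpt ζ]
    exact hmemU _ (hseg ζ.re hζ) _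
  have hzcont : Continuous z := by
    apply continuous_pi
    intro j
    exact Complex.continuous_exp.comp (by continuity)
  -- global bound C on the strip
  have hsegΩ : ∀ e ∈ segment ℝ x y, e ∈ Ω := fun e he => hΩconv.segment_subset hx hy he
  set K : Set (Fin n → ℂ) :=
    (fun q : (Fin n → ℝ) × (Fin n → ℝ) => pt q.1 q.2) '' ((segment ℝ x y) ×ˢ Tor) with hK
  have hsegcomp : IsCompact (segment ℝ x y) := by
    rw [segment_eq_image']
    exact isCompact_Icc.image (by continuity)
  have hKcomp : IsCompact K := by
    apply IsCompact.image_of_continuousOn (hsegcomp.prod hTorComp)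
    apply Continuous.continuousOn
    apply continuous_pi
    intro j
    apply Complex.continuous_exp.comp
    exact ((Complex.continuous_ofReal.comp ((continuous_apply j).comp continuous_fst)).add
      ((Complex.continuous_ofReal.comp ((continuous_apply j).comp continuous_snd)).mul
        continuous_const))
  have hKsubU : K ⊆ U := by
    rintro _ ⟨⟨e, θ⟩, ⟨he, hθ⟩, rfl⟩
    exact hmemU e (hsegΩ e he) θ
  obtain ⟨P, hPK, hPmax⟩ := hKcomp.exists_isMaxOn
    ⟨pt x (fun _ => 0), ⟨(x, fun _ => 0), ⟨left_mem_segment ℝ x y,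
      fun j _ => ⟨le_refl 0, by positivity⟩⟩, rfl⟩⟩
    (hC2.continuousOn.mono hKsubU)
  have hCbound : ∀ q ∈ K, g q ≤ g P := fun q hq => hPmax hq
  set C := g P with hCdef
  -- bounds on the strip
  have hptK : ∀ e, e ∈ segment ℝ x y → ∀ θ : Fin n → ℝ, g (pt e θ) ≤ C := by
    intro e he θ
    obtain ⟨θ', hθ'Tor, hθ'eq⟩ := reduce_theta n e θ
    have : pt e θ = pt e θ' := by rw [hpt]; simp only; rw [hθ'eq]
    rw [this]
    exact hCbound _ ⟨(e, θ'), ⟨he, hθ'Tor⟩, rfl⟩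
  have huC : ∀ ζ : ℂ, ζ.re ∈ Set.Icc (0:ℝ) 1 → u ζ ≤ C := by
    intro ζ hζ
    rw [hu]            -- u ζ = g (z ζ)
    simp only
    rw [hzpt ζ]
    apply hptK
    rw [segment_eq_image']
    refine ⟨ζ.re, hζ, ?_⟩
    funext j
    simp only [Pi.add_apply, Pi.smul_apply, Pi.sub_apply, smul_eq_mul]
  have huA : ∀ ζ : ℂ, ζ.re = 0 → u ζ ≤ M x := by
    intro ζ hζ
    rw [hu]; simp only
    rw [hzpt ζ, hζ]
    have : (fun j => x j + (0:ℝ) * (y j - x j)) = x := by funext j; ring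
    rw [this]
    exact hMle x hx _
  have huB : ∀ ζ : ℂ, ζ.re = 1 → u ζ ≤ M y := by
    intro ζ hζ
    rw [hu]; simp only
    rw [hzpt ζ, hζ]
    have : (fun j => x j + (1:ℝ) * (y j - x j)) = y := by funext j; ring
    rw [this]
    exact hMle y hy _
  have hucont : ∀ ζ : ℂ, ζ.re ∈ Set.Icc (0:ℝ) 1 → ContinuousAt u ζ := by
    intro ζ hζ
    exact (hC2.continuousOn.continuousAt (hUopen.mem_nhds (hzU ζ hζ))).comp
      hzcont.continuousAt
  -- subharmonicity data
  have hcurve : ∀ (e : ℂ) (ζ : ℂ) (t : ℝ),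
      HasDerivAt (fun t' : ℝ => z (ζ + t' • e)) (fun j => (e * bc j) * z (ζ + t • e) j) t := by
    intro e ζ t
    apply hasDerivAt_pi_of
    intro j
    have hinner : HasDerivAt (fun t' : ℝ => cc j + (ζ + t' • e) * bc j) (e * bc j) t := by
      have h := ((hasDerivAt_id' (𝕜:=ℝ) t).smul_const (e * bc j)).const_add (cc j + ζ * bc j)
      have heq : (fun t' : ℝ => cc j + ζ * bc j + t' • (e * bc j))
          = (fun t' : ℝ => cc j + (ζ + t' • e) * bc j) := by
        funext t'
        simp only [Complex.real_smul]
        ring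
      rw [heq] at h
      simpa using h
    have h2 := hinner.cexp
    rw [hz]
    simp only
    convert h2 using 1
    rw [mul_comm]
  have hsub : ∀ ζ : ℂ, ζ.re ∈ Set.Icc (0:ℝ) 1 → ∃ p q : ℝ → ℝ, ∃ Lp Lq : ℝ,
      (∀ᶠ t in nhds (0:ℝ), HasDerivAt (fun t' => u (ζ + t' • (1:ℂ))) (p t) t) ∧
      HasDerivAt p Lp 0 ∧
      (∀ᶠ t in nhds (0:ℝ), HasDerivAt (fun t' => u (ζ + t' • Complex.I)) (q t) t) ∧
      HasDerivAt q Lq 0 ∧ 0 ≤ Lp + Lq := by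
    intro ζ hζ
    have hzζ : z ζ ∈ U := hzU ζ hζ
    have hnear : ∀ᶠ w in nhds ζ, z w ∈ U :=
      hzcont.continuousAt.preimage_mem_nhds (hUopen.mem_nhds hzζ)
    have H2 : ∀ e : ℂ,
        (∀ᶠ t in nhds (0:ℝ), HasDerivAt (fun t' => u (ζ + t' • e))
          (fderiv ℝ g (z (ζ + t • e)) (fun j => (e * bc j) * z (ζ + t • e) j)) t) ∧
        HasDerivAt (fun t : ℝ => fderiv ℝ g (z (ζ + t • e)) (fun j => (e * bc j) * z (ζ + t • e) j))
          (fderiv ℝ (fderiv ℝ g) (z ζ) (fun j => (e * bc j) * z ζ j) (fun j => (e * bc j) * z ζ j)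
            + fderiv ℝ g (z ζ) (fun j => (e * bc j) * ((e * bc j) * z ζ j))) 0 := by
      intro e
      have hline : Continuous (fun t : ℝ => ζ + t • e) := by continuity
      have h00 : ζ + (0:ℝ) • e = ζ := by simp
      have hev : ∀ᶠ t in nhds (0:ℝ), z (ζ + t • e) ∈ U :=
        (hline.tendsto' 0 ζ (by simp)).eventually hnear
      constructor
      · filter_upwards [hev] with t hmem
        have hgd : HasFDerivAt g (fderiv ℝ g (z (ζ + t • e))) (z (ζ + t • e)) :=
          ((hC2.contDiffAt (hUopen.mem_nhds hmem)).differentiableAt (by norm_num)).hasFDerivAt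
        have := hgd.comp_hasDerivAt t (hcurve e ζ t)
        exact this
      · have hgd2 : HasFDerivAt (fderiv ℝ g) (fderiv ℝ (fderiv ℝ g) (z ζ)) (z ζ) := by
          have h1 : ContDiffAt ℝ 2 g (z ζ) := hC2.contDiffAt (hUopen.mem_nhds hzζ)
          exact ((h1.fderiv_right (m := 1) (by norm_num)).differentiableAt one_ne_zero).hasFDerivAt
        have hcv0 : HasDerivAt (fun t' : ℝ => z (ζ + t' • e)) (fun j => (e * bc j) * z ζ j) 0 := by
          have hcv := hcurve e ζ 0
          rw [h00] at hcv
          exact hcv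
        have hc1 : HasDerivAt (fun t : ℝ => fderiv ℝ g (z (ζ + t • e)))
            (fderiv ℝ (fderiv ℝ g) (z ζ) (fun j => (e * bc j) * z ζ j)) 0 := by
          have hgd2' : HasFDerivAt (fderiv ℝ g) (fderiv ℝ (fderiv ℝ g) (z ζ))
              (z (ζ + (0:ℝ) • e)) := by rw [h00]; exact hgd2
          have hcmp := hgd2'.comp_hasDerivAt 0 hcv0
          simpa [Function.comp_def] using hcmp
        have hc2 : HasDerivAt (fun t : ℝ => (fun j => (e * bc j) * z (ζ + t • e) j))
            (fun j => (e * bc j) * ((e * bc j) * z ζ j)) 0 := by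
          apply hasDerivAt_pi_of
          intro j
          have hj := hasDerivAt_coord (hcurve e ζ 0) j
          rw [h00] at hj
          exact hj.const_mul (e * bc j)
        have hfin := hc1.clm_apply hc2
        rw [h00] at hfin
        exact hfin
    obtain ⟨h1ev, h1d⟩ := H2 1
    obtain ⟨hIev, hId⟩ := H2 Complex.I
    refine ⟨_, _, _, _, h1ev, h1d, hIev, hId, ?_⟩
    -- positivity via PSH
    set v : Fin n → ℂ := fun j => bc j * z ζ j with hv
    have hv1 : (fun j => ((1:ℂ) * bc j) * z ζ j) = v := by
      funext j; simp only [hv]; ring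
    have hvI : (fun j => (Complex.I * bc j) * z ζ j) = Complex.I • v := by
      funext j; simp only [hv, Pi.smul_apply, smul_eq_mul]; ring
    have hw1 : (fun j => ((1:ℂ) * bc j) * (((1:ℂ) * bc j) * z ζ j))
        = (fun j => bc j * (bc j * z ζ j)) := by funext j; ring
    have hwI : (fun j => (Complex.I * bc j) * ((Complex.I * bc j) * z ζ j))
        = fun j => -(bc j * (bc j * z ζ j)) := by
      funext j
      have hii : Complex.I * Complex.I = -1 := Complex.I_mul_I
      linear_combination (bc j * (bc j * z ζ j)) * hii
    rw [hv1, hvI, hw1, hwI]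
    have hmapneg : fderiv ℝ g (z ζ) (fun j => -(bc j * (bc j * z ζ j)))
        = - fderiv ℝ g (z ζ) (fun j => (bc j * (bc j * z ζ j))) := by
      rw [show (fun j => -(bc j * (bc j * z ζ j))) = -(fun j => (bc j * (bc j * z ζ j))) from rfl,
        map_neg]
    rw [hmapneg]
    have hlev := hPSH (z ζ) hzζ v
    rw [levi_eq n g U hUopen (z ζ) hzζ v] at hlev
    linarith
  -- apply three lines
  have h3 := three_lines u (M x) (M y) C hucont hsub huA huB huC
  have hbmem : ((b:ℂ)).re ∈ Set.Icc (0:ℝ) 1 := by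
    simp only [Complex.ofReal_re]
    exact ⟨hb, hb1⟩
  have hfinal := h3 (b:ℂ) hbmem
  have hub : u (b:ℂ) = M xt := by
    rw [hθseq, hu]
    simp only
    congr 1
    rw [hzpt]
    simp only [Complex.ofReal_re, Complex.ofReal_im]
    rw [hpt]
    funext j
    simp only
    congr 2
    · push_cast
      rw [hxt]
      simp only [Pi.add_apply, Pi.smul_apply, smul_eq_mul]
      push_cast
      rw [ha1]
      push_cast
      ring
    · ring
  rw [hub] at hfinal
  simp only [Complex.ofReal_re] at hfinal
  rw [hxt] at hfinal ⊢
  calc M (a • x + b • y) ≤ (1 - b) * M x + b * M y := hfinal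
    _ = a * M x + b * M y := by rw [ha1]
end

section
/- Any C² plurisubharmonic function g : (ℂ*)ⁿ → ℝ which is bounded from above is constant (Liouville theorem for PSH functions on (ℂ*)ⁿ). -/
open MeasureTheory

open Complex intervalIntegral Set

noncomputable section
namespace PSHL

variable {F : Type*} [NormedAddCommGroup F] [NormedSpace ℝ F]

lemma periodic_fderiv (f : ℂ → F) (p : ℂ) (hper : ∀ t, f (t + p) = f t)
    (hd : Differentiable ℝ f) (t : ℂ) : fderiv ℝ f (t + p) = fderiv ℝ f t := by
  have h1 : HasFDerivAt (fun s => f (s + p)) (fderiv ℝ f (t + p)) t := by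
    simpa [Function.comp_def] using (hd (t + p)).hasFDerivAt.comp t ((hasFDerivAt_id t).add_const p)
  have h2 : (fun s => f (s + p)) = f := funext hper
  rw [h2] at h1
  exact h1.fderiv.symm

lemma path_cont (x : ℝ) : Continuous fun y : ℝ => (x:ℂ) + (y:ℝ) * Complex.I := by
  fun_prop

lemma path_cont' (y : ℝ) : Continuous fun x : ℝ => (x:ℂ) + (y:ℝ) * Complex.I := by
  fun_prop

lemma hasDerivAt_horiz (f : ℂ → F) (hf : Differentiable ℝ f) (x y : ℝ) :
    HasDerivAt (fun x : ℝ => f (x + y * Complex.I)) (fderiv ℝ f ((x:ℂ) + y * Complex.I) 1) x := by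
  have hp : HasDerivAt (fun x : ℝ => (x:ℂ) + y * Complex.I) 1 x := by
    simpa using (Complex.ofRealCLM.hasFDerivAt (x := x)).hasDerivAt.add_const (y * Complex.I)
  simpa [Function.comp_def] using (hf _).hasFDerivAt.comp_hasDerivAt x hp

lemma hasDerivAt_vert (f : ℂ → F) (hf : Differentiable ℝ f) (x y : ℝ) :
    HasDerivAt (fun y : ℝ => f (x + y * Complex.I)) (fderiv ℝ f ((x:ℂ) + y * Complex.I) Complex.I) y := by
  have hp : HasDerivAt (fun y : ℝ => (x:ℂ) + y * Complex.I) Complex.I y := by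
    simpa using ((Complex.ofRealCLM.hasFDerivAt (x := y)).hasDerivAt.mul_const Complex.I).const_add (x:ℂ)
  simpa [Function.comp_def] using (hf _).hasFDerivAt.comp_hasDerivAt y hp

lemma eval_contDiff {m : ℕ∞} (f : ℂ → (ℂ →L[ℝ] ℝ)) (hf : ContDiff ℝ m f) (v : ℂ) :
    ContDiff ℝ m (fun t => f t v) :=
  (ContinuousLinearMap.apply ℝ ℝ v).contDiff.comp hf

/-- Differentiation under the integral for our strip averages. -/
lemma dom_deriv (f : ℂ → ℝ) (hf : ContDiff ℝ 1 f) (x₀ : ℝ) :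
    HasDerivAt (fun x : ℝ => ∫ y in (0:ℝ)..(2*Real.pi), f ((x:ℂ) + y * Complex.I))
      (∫ y in (0:ℝ)..(2*Real.pi), fderiv ℝ f ((x₀:ℂ) + y * Complex.I) 1) x₀ := by
  have hf1c : Continuous fun t => fderiv ℝ f t 1 :=
    (eval_contDiff _ (hf.fderiv_right (m := 0) (by norm_num)) 1).continuous
  have hfd : Differentiable ℝ f := hf.differentiable one_ne_zero
  obtain ⟨K, hK⟩ := (isCompact_closedBall ((x₀:ℂ)) (1 + 2*Real.pi)).exists_bound_of_continuousOn
    hf1c.continuousOn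
  have hmem : ∀ (y : ℝ), y ∈ Set.uIoc (0:ℝ) (2*Real.pi) → ∀ (x : ℝ), x ∈ Metric.ball x₀ 1 →
      ((x:ℂ) + y * Complex.I) ∈ Metric.closedBall ((x₀:ℂ)) (1 + 2*Real.pi) := by
    intro y hy x hx
    rw [Set.uIoc_of_le (by positivity)] at hy
    rw [Metric.mem_ball, Real.dist_eq] at hx
    rw [Metric.mem_closedBall, dist_eq_norm]
    have e : (x:ℂ) + y * Complex.I - (x₀:ℂ) = ((x - x₀ : ℝ):ℂ) + (y:ℝ) * Complex.I := by
      push_cast; ring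
    rw [e]
    calc ‖((x - x₀ : ℝ):ℂ) + (y:ℝ) * Complex.I‖ ≤ ‖((x - x₀ : ℝ):ℂ)‖ + ‖(y:ℝ) * Complex.I‖ :=
          norm_add_le _ _
      _ ≤ 1 + 2*Real.pi := by
          rw [Complex.norm_real, norm_mul, Complex.norm_I, mul_one, Complex.norm_real,
            Real.norm_eq_abs, Real.norm_eq_abs]
          have h2 : |y| ≤ 2*Real.pi := by
            rw [abs_of_pos hy.1]; exact hy.2
          have h1 : |x - x₀| ≤ 1 := hx.le
          linarith
  have h := intervalIntegral.hasDerivAt_integral_of_dominated_loc_of_deriv_le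
    (F := fun (x : ℝ) (y : ℝ) => f ((x:ℂ) + y * Complex.I))
    (F' := fun (x : ℝ) (y : ℝ) => fderiv ℝ f ((x:ℂ) + y * Complex.I) 1)
    (bound := fun _ => K) (μ := volume) (a := 0) (b := 2*Real.pi) (x₀ := x₀)
    (Metric.ball_mem_nhds x₀ one_pos)
    (Filter.Eventually.of_forall fun x =>
      ((hf.continuous).comp (path_cont x)).aestronglyMeasurable)
    (((hf.continuous).comp (path_cont x₀)).intervalIntegrable _ _)
    ((hf1c.comp (path_cont x₀)).aestronglyMeasurable)
    (Filter.Eventually.of_forall fun y hy x hx => hK _ (hmem y hy x hx))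
    intervalIntegrable_const
    (Filter.Eventually.of_forall fun y hy x hx => hasDerivAt_horiz f hfd x y)
  exact h.2

/-- Liouville-type theorem for C² subharmonic, vertically periodic, bounded-above
functions on ℂ. -/
lemma key (u : ℂ → ℝ) (hu : ContDiff ℝ 2 u)
    (hsub : ∀ t, 0 ≤ fderiv ℝ (fun s => fderiv ℝ u s 1) t 1
      + fderiv ℝ (fun s => fderiv ℝ u s Complex.I) t Complex.I)
    (hper : ∀ t, u (t + ((2 * Real.pi : ℝ) : ℂ) * Complex.I) = u t)
    {C : ℝ} (hbd : ∀ t, u t ≤ C) (a b : ℂ) : u a = u b := by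
  set p : ℂ := ((2 * Real.pi : ℝ) : ℂ) * Complex.I with hpdef
  have hud : Differentiable ℝ u := hu.differentiable (by norm_num)
  have hu1 : ContDiff ℝ 1 (fderiv ℝ u) := hu.fderiv_right (m := 1) (by norm_num)
  have huv : ∀ v : ℂ, ContDiff ℝ 1 (fun t => fderiv ℝ u t v) := fun v => eval_contDiff _ hu1 v
  set U : ℂ → ℝ := fun t => Real.exp (u t) with hUdef
  have hUc : ContDiff ℝ 2 U := (Real.contDiff_exp.of_le le_top).comp hu
  have hUd : Differentiable ℝ U := hUc.differentiable (by norm_num)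
  have hUpos : ∀ t, 0 < U t := fun t => Real.exp_pos _
  have hUfd : ∀ t, HasFDerivAt U (U t • fderiv ℝ u t) t := fun t =>
    (Real.hasDerivAt_exp (u t)).comp_hasFDerivAt t (hud t).hasFDerivAt
  have hUv : ∀ t v, fderiv ℝ U t v = U t * fderiv ℝ u t v := by
    intro t v
    rw [(hUfd t).fderiv]
    simp
  set W : ℂ → ℝ := fun t => fderiv ℝ U t 1 with hWdef
  set V : ℂ → ℝ := fun t => fderiv ℝ U t Complex.I with hVdef
  have hU1 : ContDiff ℝ 1 (fderiv ℝ U) := hUc.fderiv_right (m := 1) (by norm_num)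
  have hWc : ContDiff ℝ 1 W := eval_contDiff _ hU1 1
  have hVc : ContDiff ℝ 1 V := eval_contDiff _ hU1 Complex.I
  have hWd : Differentiable ℝ W := hWc.differentiable one_ne_zero
  have hVd : Differentiable ℝ V := hVc.differentiable one_ne_zero
  -- second derivative of U in a direction v, in terms of u
  have hsecond : ∀ (v t : ℂ), fderiv ℝ (fun s => fderiv ℝ U s v) t v
      = U t * (fderiv ℝ (fun s => fderiv ℝ u s v) t v) + U t * (fderiv ℝ u t v)^2 := by
    intro v t
    have heq : (fun s => fderiv ℝ U s v) = fun s => U s * fderiv ℝ u s v :=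
      funext fun s => hUv s v
    rw [heq]
    have h1 : HasFDerivAt (fun s => U s * fderiv ℝ u s v)
        (U t • (fderiv ℝ (fun s => fderiv ℝ u s v) t)
          + (fderiv ℝ u t v) • (U t • fderiv ℝ u t)) t :=
      (hUfd t).mul ((huv v).differentiable one_ne_zero t).hasFDerivAt
    rw [h1.fderiv]
    simp [ContinuousLinearMap.add_apply, ContinuousLinearMap.smul_apply, smul_eq_mul]
    ring
  set LU : ℂ → ℝ := fun t => fderiv ℝ W t 1 + fderiv ℝ V t Complex.I with hLUdef
  have hLU_eq : ∀ t, LU t = U t * ((fderiv ℝ (fun s => fderiv ℝ u s 1) t 1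
      + fderiv ℝ (fun s => fderiv ℝ u s Complex.I) t Complex.I)
      + ((fderiv ℝ u t 1)^2 + (fderiv ℝ u t Complex.I)^2)) := by
    intro t
    have e1 := hsecond 1 t
    have e2 := hsecond Complex.I t
    simp only [hLUdef, hWdef, hVdef]
    rw [e1, e2]
    ring
  have hLU_nonneg : ∀ t, 0 ≤ LU t := by
    intro t
    rw [hLU_eq t]
    have := hsub t
    have := (hUpos t).le
    positivity
  have hLU_cont : Continuous LU := by
    have c1 : Continuous fun t => fderiv ℝ W t 1 :=
      (eval_contDiff _ (hWc.fderiv_right (m := 0) (by norm_num)) 1).continuous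
    have c2 : Continuous fun t => fderiv ℝ V t Complex.I :=
      (eval_contDiff _ (hVc.fderiv_right (m := 0) (by norm_num)) Complex.I).continuous
    exact c1.add c2
  -- periodicity of everything
  have hUper : ∀ t, U (t + p) = U t := fun t => by simp only [hUdef, hper t]
  have hfdU : ∀ t, fderiv ℝ U (t + p) = fderiv ℝ U t := periodic_fderiv U p hUper hUd
  have hWper : ∀ t, W (t + p) = W t := fun t => by simp only [hWdef]; rw [hfdU]
  have hVper : ∀ t, V (t + p) = V t := fun t => by simp only [hVdef]; rw [hfdU]
  have hfdW : ∀ t, fderiv ℝ W (t + p) = fderiv ℝ W t := periodic_fderiv W p hWper hWd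
  have hfdV : ∀ t, fderiv ℝ V (t + p) = fderiv ℝ V t := periodic_fderiv V p hVper hVd
  have hLUper : ∀ t, LU (t + p) = LU t := fun t => by
    simp only [hLUdef]; rw [hfdW, hfdV]
  -- the integrals
  have tp_pos : (0:ℝ) < 2 * Real.pi := by positivity
  set A : ℝ → ℝ := fun x => ∫ y in (0:ℝ)..(2*Real.pi), U ((x:ℂ) + y * Complex.I) with hAdef
  set B : ℝ → ℝ := fun x => ∫ y in (0:ℝ)..(2*Real.pi), W ((x:ℂ) + y * Complex.I) with hBdef
  have hA' : ∀ x₀ : ℝ, HasDerivAt A (B x₀) x₀ := by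
    intro x₀
    have h := dom_deriv U (hUc.of_le (by norm_num)) x₀
    exact h
  have hB' : ∀ x₀ : ℝ, HasDerivAt B
      (∫ y in (0:ℝ)..(2*Real.pi), fderiv ℝ W ((x₀:ℂ) + y * Complex.I) 1) x₀ :=
    fun x₀ => dom_deriv W hWc x₀
  -- the vertical part integrates to zero
  have hVI_cont : Continuous fun t => fderiv ℝ V t Complex.I :=
    (eval_contDiff _ (hVc.fderiv_right (m := 0) (by norm_num)) Complex.I).continuous
  have hWx_cont : Continuous fun t => fderiv ℝ W t 1 :=
    (eval_contDiff _ (hWc.fderiv_right (m := 0) (by norm_num)) 1).continuous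
  have hVert : ∀ x : ℝ, (∫ y in (0:ℝ)..(2*Real.pi),
      fderiv ℝ V ((x:ℂ) + y * Complex.I) Complex.I) = 0 := by
    intro x
    have hint : IntervalIntegrable (fun y : ℝ => fderiv ℝ V ((x:ℂ) + y * Complex.I) Complex.I)
        volume 0 (2*Real.pi) := (hVI_cont.comp (path_cont x)).intervalIntegrable _ _
    have h := intervalIntegral.integral_eq_sub_of_hasDerivAt
      (a := 0) (b := 2*Real.pi)
      (f := fun y : ℝ => V ((x:ℂ) + y * Complex.I))
      (f' := fun y : ℝ => fderiv ℝ V ((x:ℂ) + y * Complex.I) Complex.I)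
      (fun y _ => hasDerivAt_vert V hVd x y)
      hint
    rw [h]
    show V ((x:ℂ) + ((2*Real.pi:ℝ):ℂ) * Complex.I) - V ((x:ℂ) + ((0:ℝ):ℂ) * Complex.I) = 0
    have e : (x:ℂ) + ((2*Real.pi : ℝ):ℂ) * Complex.I = ((x:ℂ) + ((0:ℝ):ℂ) * Complex.I) + p := by
      rw [hpdef]; push_cast; ring
    rw [e, hVper, sub_self]
  have hE : ∀ x₀ : ℝ, HasDerivAt B (∫ y in (0:ℝ)..(2*Real.pi), LU ((x₀:ℂ) + y * Complex.I)) x₀ := by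
    intro x₀
    have e : (∫ y in (0:ℝ)..(2*Real.pi), LU ((x₀:ℂ) + y * Complex.I))
        = (∫ y in (0:ℝ)..(2*Real.pi), fderiv ℝ W ((x₀:ℂ) + y * Complex.I) 1)
          + ∫ y in (0:ℝ)..(2*Real.pi), fderiv ℝ V ((x₀:ℂ) + y * Complex.I) Complex.I := by
      have i1 : IntervalIntegrable (fun y : ℝ => fderiv ℝ W ((x₀:ℂ) + y * Complex.I) 1)
          volume 0 (2*Real.pi) := (hWx_cont.comp (path_cont x₀)).intervalIntegrable _ _
      have i2 : IntervalIntegrable (fun y : ℝ => fderiv ℝ V ((x₀:ℂ) + y * Complex.I) Complex.I)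
          volume 0 (2*Real.pi) := (hVI_cont.comp (path_cont x₀)).intervalIntegrable _ _
      rw [← intervalIntegral.integral_add i1 i2]
    rw [e, hVert x₀, add_zero]
    exact hB' x₀
  have hEnn : ∀ x₀ : ℝ, 0 ≤ ∫ y in (0:ℝ)..(2*Real.pi), LU ((x₀:ℂ) + y * Complex.I) :=
    fun x₀ => intervalIntegral.integral_nonneg tp_pos.le (fun y _ => hLU_nonneg _)
  have hBmono : Monotone B :=
    monotone_of_deriv_nonneg (fun x => (hE x).differentiableAt)
      (fun x => by rw [(hE x).deriv]; exact hEnn x)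
  have hAnn : ∀ x, 0 ≤ A x := fun x =>
    intervalIntegral.integral_nonneg tp_pos.le (fun y _ => (hUpos _).le)
  have hAub : ∀ x, A x ≤ 2*Real.pi * Real.exp C := by
    intro x
    calc A x ≤ ∫ _ in (0:ℝ)..(2*Real.pi), Real.exp C := by
          apply intervalIntegral.integral_mono_on tp_pos.le
            ((hUc.continuous.comp (path_cont x)).intervalIntegrable _ _)
            intervalIntegrable_const
            (fun y _ => Real.exp_le_exp.mpr (hbd _))
      _ = 2*Real.pi * Real.exp C := by simp
  have hBzero : ∀ x, B x = 0 := by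
    intro x₀
    by_contra hne
    have hφd : ∀ x : ℝ, HasDerivAt (fun x => A x - x * B x₀) (B x - B x₀) x := fun x =>
      (hA' x).sub (hasDerivAt_mul_const (B x₀))
    have hφdiff : Differentiable ℝ (fun x => A x - x * B x₀) := fun x =>
      (hφd x).differentiableAt
    rcases lt_or_gt_of_ne hne with hneg | hpos
    · -- B x₀ < 0 : A grows without bound to the left
      have hanti : AntitoneOn (fun x => A x - x * B x₀) (Iic x₀) := by
        apply antitoneOn_of_deriv_nonpos (convex_Iic x₀) hφdiff.continuous.continuousOn
          (fun x _ => (hφd x).differentiableAt.differentiableWithinAt)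
        intro x hx
        rw [interior_Iic] at hx
        rw [(hφd x).deriv]
        have := hBmono hx.le
        linarith
      have hlarge : ∀ x, x ≤ x₀ → A x₀ + (x₀ - x) * (-(B x₀)) ≤ A x := by
        intro x hx
        have h := hanti (mem_Iic.mpr hx) (mem_Iic.mpr le_rfl) hx
        have h' : A x₀ - x₀ * B x₀ ≤ A x - x * B x₀ := h
        nlinarith [h']
      have hBpos : 0 < -(B x₀) := by linarith
      set xx := x₀ - (2*Real.pi*Real.exp C + 1)/(-(B x₀)) with hxx
      have h1 : xx ≤ x₀ := by
        have : 0 ≤ (2*Real.pi*Real.exp C + 1)/(-(B x₀)) := by positivity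
        rw [hxx]; linarith
      have h2 := hlarge xx h1
      have h3 : (x₀ - xx) * (-(B x₀)) = 2*Real.pi*Real.exp C + 1 := by
        rw [hxx]; field_simp
        try ring
      rw [h3] at h2
      have h4 := hAub xx
      have h5 := hAnn x₀
      linarith
    · -- B x₀ > 0 : A grows without bound to the right
      have hmono : MonotoneOn (fun x => A x - x * B x₀) (Ici x₀) := by
        apply monotoneOn_of_deriv_nonneg (convex_Ici x₀) hφdiff.continuous.continuousOn
          (fun x _ => (hφd x).differentiableAt.differentiableWithinAt)
        intro x hx
        rw [interior_Ici] at hx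
        rw [(hφd x).deriv]
        have := hBmono hx.le
        linarith
      have hlarge : ∀ x, x₀ ≤ x → A x₀ + (x - x₀) * (B x₀) ≤ A x := by
        intro x hx
        have h := hmono (mem_Ici.mpr le_rfl) (mem_Ici.mpr hx) hx
        have h' : A x₀ - x₀ * B x₀ ≤ A x - x * B x₀ := h
        nlinarith [h']
      have hBpos : 0 < B x₀ := hpos
      set xx := x₀ + (2*Real.pi*Real.exp C + 1)/(B x₀) with hxx
      have h1 : x₀ ≤ xx := by
        have : 0 ≤ (2*Real.pi*Real.exp C + 1)/(B x₀) := by positivity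
        rw [hxx]; linarith
      have h2 := hlarge xx h1
      have h3 : (xx - x₀) * (B x₀) = 2*Real.pi*Real.exp C + 1 := by
        rw [hxx]; field_simp
        try ring
      rw [h3] at h2
      have h4 := hAub xx
      have h5 := hAnn x₀
      linarith
  have hIntZero : ∀ x₀ : ℝ, (∫ y in (0:ℝ)..(2*Real.pi), LU ((x₀:ℂ) + y * Complex.I)) = 0 := by
    intro x₀
    have h1 := (hE x₀).deriv
    have h2 : deriv B x₀ = 0 := by
      have hB0 : B = fun _ => (0:ℝ) := funext hBzero
      rw [hB0, deriv_const]
    rw [← h1, h2]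
  have hstrip : ∀ (x y : ℝ), y ∈ Icc (0:ℝ) (2*Real.pi) → LU ((x:ℂ) + y * Complex.I) = 0 := by
    intro x y₀ hy₀
    by_contra hne
    set f : ℝ → ℝ := fun y => LU ((x:ℂ) + y * Complex.I) with hfdef
    have hfc : Continuous f := hLU_cont.comp (path_cont x)
    have hfnn : ∀ y, 0 ≤ f y := fun y => hLU_nonneg _
    have hposy : 0 < f y₀ := lt_of_le_of_ne (hfnn y₀) (Ne.symm hne)
    obtain ⟨δ, hδpos, hδ⟩ : ∃ δ > 0, ∀ s, |s - y₀| < δ → f y₀ / 2 < f s := by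
      obtain ⟨δ, hδ, hh⟩ := Metric.continuousAt_iff.mp hfc.continuousAt (f y₀ / 2) (by positivity)
      refine ⟨δ, hδ, fun s hs => ?_⟩
      have h := hh (show dist s y₀ < δ by rwa [Real.dist_eq])
      rw [Real.dist_eq] at h
      have h2 := abs_lt.mp h
      linarith [h2.1]
    set α := max 0 (y₀ - δ/2) with hα
    set β := min (2*Real.pi) (y₀ + δ/2) with hβ
    have hαβ : α < β := by
      rw [hα, hβ, lt_min_iff]
      constructor
      · exact max_lt tp_pos (by linarith [hy₀.2])
      · exact max_lt (by linarith [hy₀.1]) (by linarith)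
    have hsub2 : ∀ s ∈ Icc α β, f y₀ / 2 ≤ f s := by
      intro s hs
      refine le_of_lt (hδ s ?_)
      rw [abs_lt]
      constructor
      · linarith [hs.1, le_max_right (0:ℝ) (y₀ - δ/2)]
      · linarith [hs.2, min_le_right (2*Real.pi) (y₀ + δ/2)]
    have h0α : (0:ℝ) ≤ α := le_max_left _ _
    have hβ2π : β ≤ 2*Real.pi := min_le_left _ _
    have i1 : IntervalIntegrable f volume 0 α := hfc.intervalIntegrable _ _
    have i2 : IntervalIntegrable f volume α β := hfc.intervalIntegrable _ _
    have i3 : IntervalIntegrable f volume β (2*Real.pi) := hfc.intervalIntegrable _ _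
    have esplit : (∫ s in (0:ℝ)..α, f s) + (∫ s in α..β, f s) + (∫ s in β..(2*Real.pi), f s)
        = ∫ s in (0:ℝ)..(2*Real.pi), f s := by
      rw [intervalIntegral.integral_add_adjacent_intervals i1 i2,
        intervalIntegral.integral_add_adjacent_intervals (i1.trans i2) i3]
    have hz : (∫ s in (0:ℝ)..(2*Real.pi), f s) = 0 := hIntZero x
    have n1 : 0 ≤ ∫ s in (0:ℝ)..α, f s :=
      intervalIntegral.integral_nonneg h0α (fun s _ => hfnn s)
    have n3 : 0 ≤ ∫ s in β..(2*Real.pi), f s :=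
      intervalIntegral.integral_nonneg hβ2π (fun s _ => hfnn s)
    have hmid : (β - α) * (f y₀ / 2) ≤ ∫ s in α..β, f s := by
      have hc : (∫ _ in α..β, f y₀ / 2) = (β - α) * (f y₀ / 2) := by
        rw [intervalIntegral.integral_const, smul_eq_mul]
      rw [← hc]
      exact intervalIntegral.integral_mono_on hαβ.le intervalIntegrable_const i2 hsub2
    have hprodpos : 0 < (β - α) * (f y₀ / 2) :=
      mul_pos (sub_pos.mpr hαβ) (by positivity)
    linarith
  have hLUzero : ∀ t : ℂ, LU t = 0 := by
    intro t
    have hPer : Function.Periodic LU p := hLUper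
    set k : ℤ := ⌊t.im / (2*Real.pi)⌋ with hk
    have h1 : 0 ≤ t.im - k * (2*Real.pi) := Int.sub_floor_div_mul_nonneg t.im tp_pos
    have h2 : t.im - k * (2*Real.pi) < 2*Real.pi := Int.sub_floor_div_mul_lt t.im tp_pos
    set y' : ℝ := t.im - k * (2*Real.pi) with hy'
    have him : t.im = y' + (k:ℝ) * (2*Real.pi) := by rw [hy']; ring
    have e : t = ((t.re:ℂ) + (y':ℝ) * Complex.I) + (k:ℂ) * p := by
      calc t = (t.re:ℂ) + (t.im:ℝ) * Complex.I := (Complex.re_add_im t).symm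
        _ = ((t.re:ℂ) + (y':ℝ) * Complex.I) + (k:ℂ) * p := by
            rw [hpdef, him]; push_cast; ring
    have hPk := (hPer.int_mul k) ((t.re:ℂ) + (y':ℝ) * Complex.I)
    rw [e, hPk]
    exact hstrip t.re y' ⟨h1, h2.le⟩
  have hgrad : ∀ t, fderiv ℝ u t = 0 := by
    intro t
    have h0 := hLU_eq t
    rw [hLUzero t] at h0
    have h1 := hsub t
    have h2 := hUpos t
    have hsq1 : (fderiv ℝ u t 1)^2 = 0 := by
      nlinarith [sq_nonneg (fderiv ℝ u t 1), sq_nonneg (fderiv ℝ u t Complex.I)]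
    have hsq2 : (fderiv ℝ u t Complex.I)^2 = 0 := by
      nlinarith [sq_nonneg (fderiv ℝ u t 1), sq_nonneg (fderiv ℝ u t Complex.I)]
    have e1 : fderiv ℝ u t 1 = 0 := by
      have := sq_eq_zero_iff.mp hsq1; exact this
    have e2 : fderiv ℝ u t Complex.I = 0 := sq_eq_zero_iff.mp hsq2
    apply ContinuousLinearMap.ext
    intro w
    have hw : w.re • (1:ℂ) + w.im • Complex.I = w := by
      rw [Complex.real_smul, Complex.real_smul, mul_one, Complex.re_add_im]
    calc (fderiv ℝ u t) w = (fderiv ℝ u t) (w.re • (1:ℂ) + w.im • Complex.I) := by rw [hw]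
      _ = w.re • (fderiv ℝ u t 1) + w.im • (fderiv ℝ u t Complex.I) := by
          rw [map_add, ContinuousLinearMap.map_smul_of_tower, ContinuousLinearMap.map_smul_of_tower]
      _ = 0 := by rw [e1, e2]; simp
  exact is_const_of_fderiv_eq_zero hud hgrad a b

lemma levi_eq {n : ℕ} (g : (Fin n → ℂ) → ℝ) (S : Set (Fin n → ℂ)) (hSo : IsOpen S)
    {po : Fin n → ℂ} (hp : po ∈ S) (v : Fin n → ℂ) :
    iteratedFDerivWithin ℝ 2 g S po ![v, v] = fderiv ℝ (fderiv ℝ g) po v v := by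
  rw [iteratedFDerivWithin_two_apply g hSo.uniqueDiffOn hp]
  have h0 : Set.EqOn (fderivWithin ℝ g S) (fderiv ℝ g) S := fun q hq =>
    fderivWithin_of_isOpen hSo hq
  rw [fderivWithin_congr h0 (h0 hp), fderivWithin_of_isOpen hSo hp]
  simp

lemma levi_val {n : ℕ} (g : (Fin n → ℂ) → ℝ) (S : Set (Fin n → ℂ)) (hSo : IsOpen S)
    {po : Fin n → ℂ} (hp : po ∈ S) (v : Fin n → ℂ) :
    leviFormWithin n g S po v
      = (1/4) * (fderiv ℝ (fderiv ℝ g) po v v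
        + fderiv ℝ (fderiv ℝ g) po (Complex.I • v) (Complex.I • v)) := by
  rw [leviFormWithin, levi_eq g S hSo hp v, levi_eq g S hSo hp (Complex.I • v)]

lemma chain_subharm {n : ℕ} (g : (Fin n → ℂ) → ℝ) (S : Set (Fin n → ℂ)) (hSo : IsOpen S)
    (hC2 : ContDiffOn ℝ 2 g S) (hPSH : PlurisubharmonicOn n g S)
    (c E : Fin n → ℂ) (hmaps : ∀ t : ℂ, c + Complex.exp t • E ∈ S) (t : ℂ) :
    0 ≤ fderiv ℝ (fun s => fderiv ℝ (fun z => g (c + Complex.exp z • E)) s 1) t 1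
      + fderiv ℝ (fun s => fderiv ℝ (fun z => g (c + Complex.exp z • E)) s Complex.I) t
          Complex.I := by
  set Ψ : ℂ → (Fin n → ℂ) := fun z => c + Complex.exp z • E with hΨdef
  set u : ℂ → ℝ := fun z => g (Ψ z) with hudef
  set T : ℂ →L[ℝ] (Fin n → ℂ) := (ContinuousLinearMap.toSpanSingleton ℂ E).restrictScalars ℝ
    with hTdef
  have hTapp : ∀ a : ℂ, T a = a • E := fun a => rfl
  -- derivative of the exponential curve with a complex factor v
  have hmulexp : ∀ (v s : ℂ), HasFDerivAt (fun z => (v * Complex.exp z) • E)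
      (T.comp ((ContinuousLinearMap.smulRight (1 : ℂ →L[ℂ] ℂ) (v * Complex.exp s)).restrictScalars
        ℝ)) s := by
    intro v s
    have h1 : HasDerivAt (fun z => v * Complex.exp z) (v * Complex.exp s) s :=
      (Complex.hasDerivAt_exp s).const_mul v
    have h2 := (h1.hasFDerivAt).restrictScalars ℝ
    exact T.hasFDerivAt.comp s h2
  have hΨfd : ∀ s : ℂ, HasFDerivAt Ψ
      (T.comp ((ContinuousLinearMap.smulRight (1 : ℂ →L[ℂ] ℂ) (1 * Complex.exp s)).restrictScalars
        ℝ)) s := by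
    intro s
    have h := (hmulexp 1 s).const_add c
    simp only [one_mul] at h ⊢; exact h
  have hCA : ∀ s : ℂ, ContDiffAt ℝ 2 g (Ψ s) := fun s =>
    hC2.contDiffAt (hSo.mem_nhds (hmaps s))
  have hg_at : ∀ s : ℂ, DifferentiableAt ℝ g (Ψ s) := fun s =>
    (hCA s).differentiableAt (by norm_num)
  have hgd_at : ∀ s : ℂ, DifferentiableAt ℝ (fderiv ℝ g) (Ψ s) := fun s =>
    ((hCA s).fderiv_right (m := 1) (by norm_num)).differentiableAt one_ne_zero
  have hu_eval : ∀ (s v : ℂ), fderiv ℝ u s v = fderiv ℝ g (Ψ s) ((v * Complex.exp s) • E) := by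
    intro s v
    have hfd : HasFDerivAt u ((fderiv ℝ g (Ψ s)).comp
        (T.comp ((ContinuousLinearMap.smulRight (1 : ℂ →L[ℂ] ℂ)
          (1 * Complex.exp s)).restrictScalars ℝ))) s :=
      (hg_at s).hasFDerivAt.comp s (hΨfd s)
    rw [hfd.fderiv]
    simp [hTapp, smul_smul]
  -- second derivative in direction v
  have hsecond : ∀ v : ℂ, fderiv ℝ (fun s => fderiv ℝ u s v) t v
      = fderiv ℝ (fderiv ℝ g) (Ψ t) ((v * Complex.exp t) • E) ((v * Complex.exp t) • E)
        + fderiv ℝ g (Ψ t) ((v * v * Complex.exp t) • E) := by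
    intro v
    have heq : (fun s => fderiv ℝ u s v) = fun s => fderiv ℝ g (Ψ s) ((v * Complex.exp s) • E) :=
      funext fun s => hu_eval s v
    rw [heq]
    have hc : HasFDerivAt (fun s => fderiv ℝ g (Ψ s))
        ((fderiv ℝ (fderiv ℝ g) (Ψ t)).comp
          (T.comp ((ContinuousLinearMap.smulRight (1 : ℂ →L[ℂ] ℂ)
            (1 * Complex.exp t)).restrictScalars ℝ))) t :=
      (hgd_at t).hasFDerivAt.comp t (hΨfd t)
    have happ := hc.clm_apply (hmulexp v t)
    rw [happ.fderiv]
    simp [hTapp, smul_smul]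
    ring_nf
  have e1 := hsecond 1
  have e2 := hsecond Complex.I
  rw [hudef] at e1 e2
  rw [e1, e2]
  have hII : Complex.I * Complex.I * Complex.exp t = -(1 * 1 * Complex.exp t) := by
    rw [Complex.I_mul_I]; ring
  have hneg : fderiv ℝ g (Ψ t) ((Complex.I * Complex.I * Complex.exp t) • E)
      = - fderiv ℝ g (Ψ t) ((1 * 1 * Complex.exp t) • E) := by
    rw [hII, neg_smul, map_neg]
  rw [hneg]
  have hIw : (Complex.I * Complex.exp t) • E = Complex.I • ((1 * Complex.exp t) • E) := by
    rw [smul_smul]; ring_nf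
  have hlv := levi_val g S hSo (hmaps t) ((1 * Complex.exp t) • E)
  have hpsh := hPSH (Ψ t) (hmaps t) ((1 * Complex.exp t) • E)
  rw [hlv] at hpsh
  rw [hIw]
  have hΨt : Ψ t = c + Complex.exp t • E := rfl
  rw [← hΨt] at hpsh
  linarith

theorem psh_liouville' (n : ℕ) (S : Set (Fin n → ℂ)) (hS : S = {z | ∀ j, z j ≠ 0})
    (g : (Fin n → ℂ) → ℝ)
    (hC2 : ContDiffOn ℝ 2 g S)
    (hPSH : PlurisubharmonicOn n g S)
    (hbd : ∃ C : ℝ, ∀ z ∈ S, g z ≤ C) :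
    ∀ z ∈ S, ∀ w ∈ S, g z = g w := by
  subst hS
  have hSo : IsOpen {z : Fin n → ℂ | ∀ j, z j ≠ 0} := by
    have he : {z : Fin n → ℂ | ∀ j, z j ≠ 0} = ⋂ j, (fun z : Fin n → ℂ => z j) ⁻¹' {(0:ℂ)}ᶜ := by
      ext z; simp
    rw [he]
    exact isOpen_iInter_of_finite fun j =>
      isOpen_compl_singleton.preimage (continuous_apply j)
  obtain ⟨C, hC⟩ := hbd
  intro z hz w hw
  have hz' : ∀ j, z j ≠ 0 := hz
  have hw' : ∀ j, w j ≠ 0 := hw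
  -- changing one coordinate does not change the value of g
  have onecoord : ∀ (z : Fin n → ℂ), (∀ j, z j ≠ 0) → ∀ (j : Fin n) (a : ℂ), a ≠ 0 →
      g z = g (Function.update z j a) := by
    intro z hz j a ha
    set E : Fin n → ℂ := Pi.single j 1 with hE
    set c : Fin n → ℂ := Function.update z j 0 with hc
    have hform : ∀ t : ℂ, c + Complex.exp t • E = Function.update z j (Complex.exp t) := by
      intro t; funext k
      by_cases hk : k = j
      · subst hk; simp [hc, hE]
      · simp [hc, hE, Function.update_of_ne hk, Pi.single_eq_of_ne hk]
    have hmaps : ∀ t : ℂ, c + Complex.exp t • E ∈ {z : Fin n → ℂ | ∀ j, z j ≠ 0} := by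
      intro t
      rw [hform]
      intro k
      by_cases hk : k = j
      · subst hk; simp [Complex.exp_ne_zero]
      · simp [Function.update_of_ne hk, hz k]
    have hsub := fun t => chain_subharm g _ hSo hC2 hPSH c E hmaps t
    have hΨc : ContDiff ℝ 2 (fun z : ℂ => c + Complex.exp z • E) := by
      apply contDiff_const.add
      have T : ℂ →L[ℝ] (Fin n → ℂ) := (ContinuousLinearMap.toSpanSingleton ℂ E).restrictScalars ℝ
      exact (((ContinuousLinearMap.toSpanSingleton ℂ E).restrictScalars ℝ :
          ℂ →L[ℝ] (Fin n → ℂ))).contDiff.comp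
        ((Complex.contDiff_exp (𝕜 := ℝ)).of_le le_top)
    have hCu : ContDiff ℝ 2 (fun z : ℂ => g (c + Complex.exp z • E)) := by
      rw [contDiff_iff_contDiffAt]
      intro t
      exact (hC2.contDiffAt (hSo.mem_nhds (hmaps t))).comp t hΨc.contDiffAt
    have hperiodic : ∀ t : ℂ, (fun z : ℂ => g (c + Complex.exp z • E))
        (t + ((2 * Real.pi : ℝ) : ℂ) * Complex.I) = (fun z : ℂ => g (c + Complex.exp z • E)) t := by
      intro t
      have hexpper : Complex.exp (t + ((2 * Real.pi : ℝ) : ℂ) * Complex.I) = Complex.exp t := by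
        have := Complex.exp_periodic t
        simpa using this
      simp only [hexpper]
    have hbdu : ∀ t : ℂ, (fun z : ℂ => g (c + Complex.exp z • E)) t ≤ C := fun t =>
      hC _ (hmaps t)
    have hkey := key _ hCu hsub hperiodic hbdu (Complex.log (z j)) (Complex.log a)
    simp only [hform] at hkey
    rw [Complex.exp_log (hz j), Complex.exp_log ha, Function.update_eq_self] at hkey
    exact hkey
  have main : ∀ m : ℕ, ∀ z : Fin n → ℂ, (∀ j, z j ≠ 0) → ∀ w : Fin n → ℂ, (∀ j, w j ≠ 0) →
      (∀ j : Fin n, m ≤ (j : ℕ) → z j = w j) → g z = g w := by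
    intro m
    induction m with
    | zero =>
      intro z hz w hw h
      congr 1
      funext j
      exact h j (Nat.zero_le _)
    | succ m ih =>
      intro z hz w hw h
      by_cases hm : m < n
      · have step := onecoord z hz ⟨m, hm⟩ (w ⟨m, hm⟩) (hw ⟨m, hm⟩)
        rw [step]
        have hnz : ∀ k, Function.update z (⟨m, hm⟩ : Fin n) (w ⟨m, hm⟩) k ≠ 0 := by
          intro k
          by_cases hk : k = (⟨m, hm⟩ : Fin n)
          · rw [hk, Function.update_self]; exact hw _
          · rw [Function.update_of_ne hk]; exact hz k
        have hagree : ∀ k : Fin n, m ≤ (k : ℕ) →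
            Function.update z (⟨m, hm⟩ : Fin n) (w ⟨m, hm⟩) k = w k := by
          intro k hk
          by_cases hkj : k = (⟨m, hm⟩ : Fin n)
          · rw [hkj, Function.update_self]
          · rw [Function.update_of_ne hkj]
            apply h k
            have hne : (k : ℕ) ≠ m := fun hcc => hkj (Fin.ext hcc)
            omega
        exact ih _ hnz w hw hagree
      · exact ih z hz w hw (fun j hj => absurd j.isLt (by omega))
  exact main n z hz' w hw' (fun j hj => absurd j.isLt (by omega))

end PSHL

end

/-- Liouville theorem for PSH functions on `(ℂ*)ⁿ`: any `C²` plurisubharmonic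
function bounded from above is constant. -/
theorem psh_liouville (n : ℕ) (S : Set (Fin n → ℂ)) (hS : S = {z | ∀ j, z j ≠ 0})
    (g : (Fin n → ℂ) → ℝ)
    (hC2 : ContDiffOn ℝ 2 g S)
    (hPSH : PlurisubharmonicOn n g S)
    (hbd : ∃ C : ℝ, ∀ z ∈ S, g z ≤ C) :
    ∀ z ∈ S, ∀ w ∈ S, g z = g w := by
  exact PSHL.psh_liouville' n S hS g hC2 hPSH hbd
end
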